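/- arXiv:2508.11250 — 14 statements merged into one kernel-verified Lean document; each statement's English description precedes it below -/
import Mathlib

section
/- Johnstone's terms witness the Bourn–Janelidze characterisation of semi-abelianness for Heyting semilattices: in any Heyting semilattice H, setting α₁(x,y) = x ⇨ y, α₂(x,y) = ((x ⇨ y) ⇨ y) ⇨ x and Θ(x,y,z) = (x ⇨ z) ⊓ y, one has α₁(x,x) = ⊤, α₂(x,x) = ⊤, and Θ(α₁(x,y), α₂(x,y), y) = x for all x, y ∈ H; explicitly, x ⇨ x = ⊤, ((x ⇨ x) ⇨ x) ⇨ x = ⊤, and ((x ⇨ y) ⇨ y) ⊓ ((((x ⇨ y) ⇨ y)) ⇨ x) = x. -/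
/-- Johnstone's terms witness the Bourn–Janelidze characterisation of
semi-abelianness for Heyting semilattices. -/
theorem johnstone_terms {H : Type*} [SemilatticeInf H] [OrderTop H] [HImp H]
    (adj : ∀ a b c : H, a ⊓ b ≤ c ↔ a ≤ b ⇨ c) (x y : H) :
    x ⇨ x = ⊤ ∧
    ((x ⇨ x) ⇨ x) ⇨ x = ⊤ ∧
    ((x ⇨ y) ⇨ y) ⊓ (((x ⇨ y) ⇨ y) ⇨ x) = x := by
  have h1 : x ⇨ x = ⊤ :=
    top_le_iff.mp ((adj ⊤ x x).mp inf_le_right)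
  have hXx : (x ⇨ x) ⇨ x ≤ x := by
    have := (adj ((x ⇨ x) ⇨ x) (x ⇨ x) x).mpr le_rfl
    calc (x ⇨ x) ⇨ x = ((x ⇨ x) ⇨ x) ⊓ (x ⇨ x) := by rw [h1, inf_top_eq]
      _ ≤ x := this
  refine ⟨h1, top_le_iff.mp ((adj ⊤ _ x).mp (le_trans inf_le_right hXx)), ?_⟩
  have hx_le : x ≤ (x ⇨ y) ⇨ y := (adj x (x ⇨ y) y).mp
    (by rw [inf_comm]; exact (adj (x ⇨ y) x y).mpr le_rfl)
  have hle : ((x ⇨ y) ⇨ y) ⊓ (((x ⇨ y) ⇨ y) ⇨ x) ≤ x := by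
    rw [inf_comm]; exact (adj _ _ x).mpr le_rfl
  have hge : x ≤ ((x ⇨ y) ⇨ y) ⊓ (((x ⇨ y) ⇨ y) ⇨ x) :=
    le_inf hx_le ((adj x _ x).mp inf_le_left)
  exact le_antisymm hle hge
end

section
/- The variety of Heyting semilattices admits a Pixley term: in any Heyting semilattice H, the ternary operation p(x,y,z) = ((x ⇨ y) ⇨ z) ⊓ ((z ⇨ y) ⇨ x) ⊓ ((z ⇨ x) ⇨ x) satisfies p(x,y,y) = x, p(x,x,y) = y and p(x,y,x) = x for all x, y, z ∈ H. -/
/-- The Pixley term for Heyting semilattices. -/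
def pixleyTerm {H : Type*} [SemilatticeInf H] [HImp H] (x y z : H) : H :=
  ((x ⇨ y) ⇨ z) ⊓ ((z ⇨ y) ⇨ x) ⊓ ((z ⇨ x) ⇨ x)

/-- The variety of Heyting semilattices admits a Pixley term. -/
theorem pixley_term_equations {H : Type*} [SemilatticeInf H] [OrderTop H] [HImp H]
    (adj : ∀ a b c : H, a ⊓ b ≤ c ↔ a ≤ b ⇨ c) (x y : H) :
    pixleyTerm x y y = x ∧ pixleyTerm x x y = y ∧ pixleyTerm x y x = x := by
  have le_himp : ∀ a b : H, a ≤ b ⇨ a := fun a b => (adj a b a).mp inf_le_left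
  have mp : ∀ a b : H, (a ⇨ b) ⊓ a ≤ b := fun a b => (adj _ a b).mpr le_rfl
  have refl_le : ∀ a b : H, (a ⇨ a) ⇨ b ≤ b := by
    intro a b
    have h1 : (⊤ : H) ≤ a ⇨ a := (adj ⊤ a a).mp inf_le_right
    calc (a ⇨ a) ⇨ b = ((a ⇨ a) ⇨ b) ⊓ ⊤ := (inf_top_eq _).symm
      _ ≤ ((a ⇨ a) ⇨ b) ⊓ (a ⇨ a) := inf_le_inf_left _ h1
      _ ≤ b := mp _ _
  have ge1 : ∀ a b : H, a ≤ (a ⇨ b) ⇨ b := fun a b =>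
    (adj a (a ⇨ b) b).mp (by rw [inf_comm]; exact mp a b)
  unfold pixleyTerm
  refine ⟨le_antisymm ?_ ?_, le_antisymm ?_ ?_, le_antisymm ?_ ?_⟩
  · exact le_trans inf_le_left (le_trans inf_le_right (refl_le y x))
  · exact le_inf (le_inf (ge1 x y) (le_himp x (y ⇨ y))) (le_himp x (y ⇨ x))
  · exact le_trans inf_le_left (le_trans inf_le_left (refl_le x y))
  · exact le_inf (le_inf (le_himp y (x ⇨ x) |>.trans le_rfl) (ge1 y x)) (ge1 y x)
  · exact le_trans inf_le_right (refl_le x x)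
  · exact le_inf (le_inf (le_himp x (x ⇨ y)) (le_himp x (x ⇨ y))) (le_himp x (x ⇨ x))
end

section
/- A nonempty subset K of a Heyting semilattice A is the kernel of some morphism of Heyting semilattices (i.e., K = f⁻¹({⊤}) for some Heyting semilattice B and morphism f : A → B) if and only if K is a filter of A. -/
universe u

/-- A bundled Heyting semilattice: a meet-semilattice with a top element and an
implication operation `⇨` right adjoint to meet. -/
structure HSL : Type (u + 1) where
  carrier : Type u
  [instInf : SemilatticeInf carrier]
  [instTop : OrderTop carrier]
  [instHImp : HImp carrier]
  adj : ∀ a b c : carrier, a ⊓ b ≤ c ↔ a ≤ b ⇨ c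

attribute [instance] HSL.instInf HSL.instTop HSL.instHImp

set_option linter.unusedSectionVars false

namespace KernAux

variable {A : Type u} [SemilatticeInf A] [OrderTop A] [HImp A]

theorem himp_inf_le (adjA : ∀ a b c : A, a ⊓ b ≤ c ↔ a ≤ b ⇨ c) (b c : A) :
    (b ⇨ c) ⊓ b ≤ c := (adjA _ _ _).mpr le_rfl

theorem himp_mem_of_le (adjA : ∀ a b c : A, a ⊓ b ≤ c ↔ a ≤ b ⇨ c) {K : Set A}
    (hup : ∀ x ∈ K, ∀ y : A, x ≤ y → y ∈ K) (htop : ⊤ ∈ K)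
    {a b : A} (h : a ≤ b) : a ⇨ b ∈ K :=
  hup ⊤ htop _ ((adjA ⊤ a b).mp (inf_le_right.trans h))

theorem himp_trans_mem (adjA : ∀ a b c : A, a ⊓ b ≤ c ↔ a ≤ b ⇨ c) {K : Set A}
    (hmeet : ∀ x ∈ K, ∀ y ∈ K, x ⊓ y ∈ K) (hup : ∀ x ∈ K, ∀ y : A, x ≤ y → y ∈ K)
    {a b c : A} (h1 : a ⇨ b ∈ K) (h2 : b ⇨ c ∈ K) : a ⇨ c ∈ K := by
  refine hup _ (hmeet _ h1 _ h2) _ ((adjA _ _ _).mp ?_)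
  have hb : (a ⇨ b) ⊓ (b ⇨ c) ⊓ a ≤ b :=
    le_trans (inf_le_inf_right a (inf_le_left)) (himp_inf_le adjA a b)
  calc (a ⇨ b) ⊓ (b ⇨ c) ⊓ a ≤ (b ⇨ c) ⊓ b :=
        le_inf (le_trans inf_le_left inf_le_right) hb
    _ ≤ c := himp_inf_le adjA b c

theorem himp_inf_mem (adjA : ∀ a b c : A, a ⊓ b ≤ c ↔ a ≤ b ⇨ c) {K : Set A}
    (hmeet : ∀ x ∈ K, ∀ y ∈ K, x ⊓ y ∈ K) (hup : ∀ x ∈ K, ∀ y : A, x ≤ y → y ∈ K)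
    {a b c : A} (h1 : a ⇨ b ∈ K) (h2 : a ⇨ c ∈ K) : a ⇨ b ⊓ c ∈ K := by
  refine hup _ (hmeet _ h1 _ h2) _ ((adjA _ _ _).mp (le_inf ?_ ?_))
  · exact le_trans (inf_le_inf_right a inf_le_left) (himp_inf_le adjA a b)
  · exact le_trans (inf_le_inf_right a inf_le_right) (himp_inf_le adjA a c)

theorem inf_congr_mem (adjA : ∀ a b c : A, a ⊓ b ≤ c ↔ a ≤ b ⇨ c) {K : Set A}
    (hmeet : ∀ x ∈ K, ∀ y ∈ K, x ⊓ y ∈ K) (hup : ∀ x ∈ K, ∀ y : A, x ≤ y → y ∈ K)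
    {a₁ a₂ b₁ b₂ : A} (ha : a₁ ⇨ a₂ ∈ K) (hb : b₁ ⇨ b₂ ∈ K) :
    (a₁ ⊓ b₁) ⇨ (a₂ ⊓ b₂) ∈ K := by
  refine hup _ (hmeet _ ha _ hb) _ ((adjA _ _ _).mp (le_inf ?_ ?_))
  · calc (a₁ ⇨ a₂) ⊓ (b₁ ⇨ b₂) ⊓ (a₁ ⊓ b₁) ≤ (a₁ ⇨ a₂) ⊓ a₁ :=
        inf_le_inf inf_le_left inf_le_left
      _ ≤ a₂ := himp_inf_le adjA a₁ a₂
  · calc (a₁ ⇨ a₂) ⊓ (b₁ ⇨ b₂) ⊓ (a₁ ⊓ b₁) ≤ (b₁ ⇨ b₂) ⊓ b₁ :=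
        inf_le_inf inf_le_right inf_le_right
      _ ≤ b₂ := himp_inf_le adjA b₁ b₂

theorem himp_congr_mem (adjA : ∀ a b c : A, a ⊓ b ≤ c ↔ a ≤ b ⇨ c) {K : Set A}
    (hmeet : ∀ x ∈ K, ∀ y ∈ K, x ⊓ y ∈ K) (hup : ∀ x ∈ K, ∀ y : A, x ≤ y → y ∈ K)
    {a₁ a₂ b₁ b₂ : A} (ha : a₂ ⇨ a₁ ∈ K) (hb : b₁ ⇨ b₂ ∈ K) :
    (a₁ ⇨ b₁) ⇨ (a₂ ⇨ b₂) ∈ K := by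
  refine hup _ (hmeet _ ha _ hb) _ ((adjA _ _ _).mp ((adjA _ _ _).mp ?_))
  set x := (a₂ ⇨ a₁) ⊓ (b₁ ⇨ b₂) ⊓ (a₁ ⇨ b₁) ⊓ a₂ with hx
  have h1 : x ≤ a₁ := by
    calc x ≤ (a₂ ⇨ a₁) ⊓ a₂ :=
        le_inf (le_trans inf_le_left (le_trans inf_le_left inf_le_left)) inf_le_right
      _ ≤ a₁ := himp_inf_le adjA a₂ a₁
  have h2 : x ≤ b₁ := by
    calc x ≤ (a₁ ⇨ b₁) ⊓ a₁ := le_inf (le_trans inf_le_left inf_le_right) h1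
      _ ≤ b₁ := himp_inf_le adjA a₁ b₁
  calc x ≤ (b₁ ⇨ b₂) ⊓ b₁ :=
      le_inf (le_trans inf_le_left (le_trans inf_le_left inf_le_right)) h2
    _ ≤ b₂ := himp_inf_le adjA b₁ b₂

/-- The congruence induced by a filter. -/
def ks (adjA : ∀ a b c : A, a ⊓ b ≤ c ↔ a ≤ b ⇨ c) (K : Set A)
    (hmeet : ∀ x ∈ K, ∀ y ∈ K, x ⊓ y ∈ K) (hup : ∀ x ∈ K, ∀ y : A, x ≤ y → y ∈ K)
    (htop : ⊤ ∈ K) : Setoid A where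
  r a b := a ⇨ b ∈ K ∧ b ⇨ a ∈ K
  iseqv := by
    constructor
    · exact fun a => ⟨himp_mem_of_le adjA hup htop le_rfl,
        himp_mem_of_le adjA hup htop le_rfl⟩
    · exact fun h => ⟨h.2, h.1⟩
    · exact fun h h' => ⟨himp_trans_mem adjA hmeet hup h.1 h'.1,
        himp_trans_mem adjA hmeet hup h'.2 h.2⟩

variable (adjA : ∀ a b c : A, a ⊓ b ≤ c ↔ a ≤ b ⇨ c) (K : Set A)
    (hmeet : ∀ x ∈ K, ∀ y ∈ K, x ⊓ y ∈ K) (hup : ∀ x ∈ K, ∀ y : A, x ≤ y → y ∈ K)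
    (htop : ⊤ ∈ K)

def kInf : SemilatticeInf (Quotient (ks adjA K hmeet hup htop)) where
  le := Quotient.lift₂ (fun a b => a ⇨ b ∈ K) (by
    rintro a₁ b₁ a₂ b₂ ⟨ha₁, ha₂⟩ ⟨hb₁, hb₂⟩
    refine propext ⟨fun h => ?_, fun h => ?_⟩
    · exact himp_trans_mem adjA hmeet hup ha₂ (himp_trans_mem adjA hmeet hup h hb₁)
    · exact himp_trans_mem adjA hmeet hup ha₁ (himp_trans_mem adjA hmeet hup h hb₂))
  lt := Quotient.lift₂ (fun a b => a ⇨ b ∈ K ∧ ¬ b ⇨ a ∈ K) (by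
    rintro a₁ b₁ a₂ b₂ ⟨ha₁, ha₂⟩ ⟨hb₁, hb₂⟩
    refine propext (and_congr ⟨fun h => ?_, fun h => ?_⟩ (not_congr ⟨fun h => ?_, fun h => ?_⟩))
    · exact himp_trans_mem adjA hmeet hup ha₂ (himp_trans_mem adjA hmeet hup h hb₁)
    · exact himp_trans_mem adjA hmeet hup ha₁ (himp_trans_mem adjA hmeet hup h hb₂)
    · exact himp_trans_mem adjA hmeet hup hb₂ (himp_trans_mem adjA hmeet hup h ha₁)
    · exact himp_trans_mem adjA hmeet hup hb₁ (himp_trans_mem adjA hmeet hup h ha₂))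
  lt_iff_le_not_ge := fun q r => Quotient.inductionOn₂ q r fun a b => Iff.rfl
  le_refl := fun q => Quotient.inductionOn q fun a =>
    himp_mem_of_le adjA hup htop le_rfl
  le_trans := fun q r s => Quotient.inductionOn₃ q r s fun a b c h1 h2 =>
    himp_trans_mem adjA hmeet hup h1 h2
  le_antisymm := fun q r => Quotient.inductionOn₂ q r fun a b h1 h2 =>
    Quotient.sound ⟨h1, h2⟩
  inf := Quotient.map₂ (· ⊓ ·) (by
    rintro a₁ a₂ ha b₁ b₂ hb
    exact ⟨inf_congr_mem adjA hmeet hup ha.1 hb.1,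
      inf_congr_mem adjA hmeet hup ha.2 hb.2⟩)
  inf_le_left := fun q r => Quotient.inductionOn₂ q r fun a b =>
    himp_mem_of_le adjA hup htop inf_le_left
  inf_le_right := fun q r => Quotient.inductionOn₂ q r fun a b =>
    himp_mem_of_le adjA hup htop inf_le_right
  le_inf := fun q r s => Quotient.inductionOn₃ q r s fun a b c h1 h2 =>
    himp_inf_mem adjA hmeet hup h1 h2

def kHSL : HSL.{u} where
  carrier := Quotient (ks adjA K hmeet hup htop)
  instInf := kInf adjA K hmeet hup htop
  instTop :=
    letI : LE (Quotient (ks adjA K hmeet hup htop)) := (kInf adjA K hmeet hup htop).toLE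
    { top := Quotient.mk _ ⊤
      le_top := fun q => Quotient.inductionOn q fun a =>
        himp_mem_of_le adjA hup htop le_top }
  instHImp := ⟨Quotient.map₂ (· ⇨ ·) (by
    rintro a₁ a₂ ha b₁ b₂ hb
    exact ⟨himp_congr_mem adjA hmeet hup ha.2 hb.1,
      himp_congr_mem adjA hmeet hup ha.1 hb.2⟩)⟩
  adj := fun q r s => Quotient.inductionOn₃ q r s (by
    intro a b c
    show (a ⊓ b) ⇨ c ∈ K ↔ a ⇨ (b ⇨ c) ∈ K
    constructor
    · intro h
      refine hup _ h _ ((adjA _ _ _).mp ((adjA _ _ _).mp ?_))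
      rw [inf_assoc]
      exact himp_inf_le adjA (a ⊓ b) c
    · intro h
      refine hup _ h _ ((adjA _ _ _).mp ?_)
      calc (a ⇨ (b ⇨ c)) ⊓ (a ⊓ b) ≤ ((a ⇨ (b ⇨ c)) ⊓ a) ⊓ b := by rw [inf_assoc]
        _ ≤ (b ⇨ c) ⊓ b := inf_le_inf_right b (himp_inf_le adjA a (b ⇨ c))
        _ ≤ c := himp_inf_le adjA b c)

end KernAux

/-- A nonempty subset `K` of a Heyting semilattice `A` is the kernel of some morphism
of Heyting semilattices (i.e. `K = f⁻¹ {⊤}` for a morphism `f : A → B`) if and only if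
`K` is a filter of `A`. -/
theorem kernel_iff_filter {A : Type u} [SemilatticeInf A] [OrderTop A] [HImp A]
    (adjA : ∀ a b c : A, a ⊓ b ≤ c ↔ a ≤ b ⇨ c) (K : Set A) (hK : K.Nonempty) :
    (∃ B : HSL.{u}, ∃ f : A → B.carrier,
        f ⊤ = ⊤ ∧
        (∀ x y : A, f (x ⊓ y) = f x ⊓ f y) ∧
        (∀ x y : A, f (x ⇨ y) = f x ⇨ f y) ∧
        K = f ⁻¹' {⊤}) ↔
      ((∀ x ∈ K, ∀ y ∈ K, x ⊓ y ∈ K) ∧ (∀ x ∈ K, ∀ y : A, x ≤ y → y ∈ K)) := by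
  constructor
  · rintro ⟨B, f, hft, hfi, hfh, rfl⟩
    have mono : ∀ x y : A, x ≤ y → f x ≤ f y := by
      intro x y hxy
      have : f (x ⊓ y) = f x := by rw [inf_eq_left.mpr hxy]
      rw [hfi] at this
      calc f x = f x ⊓ f y := this.symm
        _ ≤ f y := inf_le_right
    constructor
    · intro x hx y hy
      simp only [Set.mem_preimage, Set.mem_singleton_iff] at *
      rw [hfi, hx, hy, inf_top_eq]
    · intro x hx y hxy
      simp only [Set.mem_preimage, Set.mem_singleton_iff] at *
      exact le_antisymm le_top (hx ▸ mono x y hxy)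
  · rintro ⟨hmeet, hup⟩
    have htop : ⊤ ∈ K := by
      obtain ⟨k, hk⟩ := hK
      exact hup k hk ⊤ le_top
    refine ⟨KernAux.kHSL adjA K hmeet hup htop,
      Quotient.mk (KernAux.ks adjA K hmeet hup htop), ?_,
      fun x y => rfl, fun x y => rfl, ?_⟩
    · with_unfolding_all rfl
    ext a
    show a ∈ K ↔ Quotient.mk (KernAux.ks adjA K hmeet hup htop) a = _
    constructor
    · intro ha
      show _ = Quotient.mk (KernAux.ks adjA K hmeet hup htop) ⊤
      refine Quotient.sound ⟨KernAux.himp_mem_of_le adjA hup htop le_top, ?_⟩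
      exact hup a ha _ ((adjA _ _ _).mp inf_le_left)
    · intro h
      have h' : Quotient.mk (KernAux.ks adjA K hmeet hup htop) a
          = Quotient.mk (KernAux.ks adjA K hmeet hup htop) ⊤ := h
      have h2 : ⊤ ⇨ a ∈ K := (Quotient.exact h').2
      refine hup _ h2 _ ?_
      calc ⊤ ⇨ a = (⊤ ⇨ a) ⊓ ⊤ := (inf_top_eq _).symm
        _ ≤ a := KernAux.himp_inf_le adjA ⊤ a
end

section
/- Characterisation of Huq-commuting subobjects in Heyting semilattices: let X and Y be sub-Heyting-semilattices of a Heyting semilattice A. There exists a map φ : X × Y → A preserving ⊤ (φ(⊤,⊤) = ⊤), binary meets (φ(x ⊓ x', y ⊓ y') = φ(x,y) ⊓ φ(x',y')) and implication (φ(x ⇨ x', y ⇨ y') = φ(x,y) ⇨ φ(x',y')), and satisfying φ(x,⊤) = x and φ(⊤,y) = y for all x ∈ X, y ∈ Y, if and only if for all x ∈ X and y ∈ Y one has x ⇨ y = y and y ⇨ x = x. Moreover, when such φ exists it is necessarily given by φ(x,y) = x ⊓ y. -/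
/-- A cooperator on a pair of subsets `X`, `Y` of a Heyting semilattice `A`:
a map (encoded as a function `A → A → A`, only its values on `X × Y` matter)
preserving `⊤`, binary meets and implication, and restricting to the inclusions
on `X` and `Y`. -/
def IsCooperator {A : Type*} [SemilatticeInf A] [OrderTop A] [HImp A]
    (X Y : Set A) (φ : A → A → A) : Prop :=
  φ ⊤ ⊤ = ⊤ ∧
  (∀ x ∈ X, ∀ x' ∈ X, ∀ y ∈ Y, ∀ y' ∈ Y, φ (x ⊓ x') (y ⊓ y') = φ x y ⊓ φ x' y') ∧
  (∀ x ∈ X, ∀ x' ∈ X, ∀ y ∈ Y, ∀ y' ∈ Y, φ (x ⇨ x') (y ⇨ y') = φ x y ⇨ φ x' y') ∧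
  (∀ x ∈ X, φ x ⊤ = x) ∧
  (∀ y ∈ Y, φ ⊤ y = y)

/-- Characterisation of Huq-commuting subobjects in Heyting semilattices:
sub-Heyting-semilattices `X` and `Y` of `A` admit a cooperator if and only if
`x ⇨ y = y` and `y ⇨ x = x` for all `x ∈ X`, `y ∈ Y`; moreover any cooperator is
given by the meet. -/
theorem huq_commute_iff {A : Type*} [SemilatticeInf A] [OrderTop A] [HImp A]
    (adj : ∀ a b c : A, a ⊓ b ≤ c ↔ a ≤ b ⇨ c) (X Y : Set A)
    (hXtop : ⊤ ∈ X) (hXmeet : ∀ x ∈ X, ∀ x' ∈ X, x ⊓ x' ∈ X)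
    (hXhimp : ∀ x ∈ X, ∀ x' ∈ X, x ⇨ x' ∈ X)
    (hYtop : ⊤ ∈ Y) (hYmeet : ∀ y ∈ Y, ∀ y' ∈ Y, y ⊓ y' ∈ Y)
    (hYhimp : ∀ y ∈ Y, ∀ y' ∈ Y, y ⇨ y' ∈ Y) :
    ((∃ φ : A → A → A, IsCooperator X Y φ) ↔
      (∀ x ∈ X, ∀ y ∈ Y, x ⇨ y = y ∧ y ⇨ x = x)) ∧
    (∀ φ : A → A → A, IsCooperator X Y φ → ∀ x ∈ X, ∀ y ∈ Y, φ x y = x ⊓ y) := by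
  -- basic consequences of the adjunction
  have himp_top : ∀ a : A, a ⇨ ⊤ = ⊤ := fun a =>
    le_antisymm le_top ((adj ⊤ a ⊤).mp le_top)
  have top_himp : ∀ a : A, ⊤ ⇨ a = a := fun a => by
    refine le_antisymm ?_ ((adj a ⊤ a).mp (by simp))
    have := (adj (⊤ ⇨ a) ⊤ a).mpr le_rfl
    simpa using this
  have curry : ∀ a b c : A, (a ⊓ b) ⇨ c = b ⇨ (a ⇨ c) := by
    intro a b c
    refine le_antisymm ?_ ?_
    · refine (adj _ _ _).mp ((adj _ _ _).mp ?_)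
      have := (adj ((a ⊓ b) ⇨ c) (a ⊓ b) c).mpr le_rfl
      calc ((a ⊓ b) ⇨ c) ⊓ b ⊓ a = ((a ⊓ b) ⇨ c) ⊓ (a ⊓ b) := by
            rw [inf_assoc, inf_comm b a]
        _ ≤ c := this
    · refine (adj _ _ _).mp ?_
      have h1 := (adj (b ⇨ (a ⇨ c)) b (a ⇨ c)).mpr le_rfl
      have h2 : (b ⇨ (a ⇨ c)) ⊓ (a ⊓ b) ≤ (a ⇨ c) ⊓ a := by
        refine le_inf ?_ ?_
        · calc (b ⇨ (a ⇨ c)) ⊓ (a ⊓ b) ≤ (b ⇨ (a ⇨ c)) ⊓ b :=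
                inf_le_inf_left _ inf_le_right
            _ ≤ a ⇨ c := h1
        · exact le_trans inf_le_right inf_le_left
      exact le_trans h2 ((adj (a ⇨ c) a c).mpr le_rfl)
  have himp_inf : ∀ a b c : A, a ⇨ (b ⊓ c) = (a ⇨ b) ⊓ (a ⇨ c) := by
    intro a b c
    refine le_antisymm (le_inf ?_ ?_) ?_
    · exact (adj _ _ _).mp (le_trans ((adj _ _ _).mpr le_rfl) inf_le_left)
    · exact (adj _ _ _).mp (le_trans ((adj _ _ _).mpr le_rfl) inf_le_right)
    · refine (adj _ _ _).mp (le_inf ?_ ?_)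
      · exact le_trans (inf_le_inf_right a inf_le_left) ((adj _ _ _).mpr le_rfl)
      · exact le_trans (inf_le_inf_right a inf_le_right) ((adj _ _ _).mpr le_rfl)
  -- any cooperator is the meet
  have key : ∀ φ : A → A → A, IsCooperator X Y φ →
      ∀ x ∈ X, ∀ y ∈ Y, φ x y = x ⊓ y := by
    intro φ ⟨_, hmeet, _, hx, hy⟩ x hx' y hy'
    have := hmeet x hx' ⊤ hXtop ⊤ hYtop y hy'
    rw [inf_top_eq, top_inf_eq, hx x hx', hy y hy'] at this
    exact this
  refine ⟨⟨?_, ?_⟩, key⟩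
  · rintro ⟨φ, hφ⟩ x hx y hy
    obtain ⟨_, _, hhimp, hx', hy'⟩ := hφ
    constructor
    · have := hhimp x hx ⊤ hXtop ⊤ hYtop y hy
      rw [himp_top, top_himp, hx' x hx, hy' y hy] at this
      exact this.symm
    · have := hhimp ⊤ hXtop x hx y hy ⊤ hYtop
      rw [himp_top, top_himp, hx' x hx, hy' y hy] at this
      exact this.symm
  · intro h
    refine ⟨fun a b => a ⊓ b, by simp, ?_, ?_, by simp, by simp⟩
    · intro x _ x' _ y _ y' _
      exact inf_inf_inf_comm x x' y y'
    · intro x hx x' hx' y hy y' hy'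
      have e1 : (x ⊓ y) ⇨ (x' ⊓ y') = ((x ⊓ y) ⇨ x') ⊓ ((x ⊓ y) ⇨ y') :=
        himp_inf _ _ _
      have e2 : (x ⊓ y) ⇨ x' = x ⇨ x' := by
        rw [curry]
        exact (h (x ⇨ x') (hXhimp x hx x' hx') y hy).2
      have e3 : (x ⊓ y) ⇨ y' = y ⇨ y' := by
        rw [inf_comm, curry]
        exact (h x hx (y ⇨ y') (hYhimp y hy y' hy')).1
      rw [e1, e2, e3]
end

section
/- Centralisers exist in Heyting semilattices: for any subset X of a Heyting semilattice A, the set Z_A(X) = {a ∈ A | for all x ∈ X, x ⇨ a = a and a ⇨ x = x} is a sub-Heyting-semilattice of A (it contains ⊤ and is closed under ⊓ and ⇨), and it contains every subset of A that pointwise commutes with X. -/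
/-- Centralisers exist in Heyting semilattices: for any subset `X` of a Heyting
semilattice `A`, the set `Z_A(X) = {a | ∀ x ∈ X, x ⇨ a = a ∧ a ⇨ x = x}` is a
sub-Heyting-semilattice of `A` containing every subset that pointwise commutes
with `X`. -/
theorem centraliser_exists {A : Type*} [SemilatticeInf A] [OrderTop A] [HImp A]
    (adj : ∀ a b c : A, a ⊓ b ≤ c ↔ a ≤ b ⇨ c) (X : Set A) :
    (⊤ ∈ {a : A | ∀ x ∈ X, x ⇨ a = a ∧ a ⇨ x = x}) ∧
    (∀ a ∈ {a : A | ∀ x ∈ X, x ⇨ a = a ∧ a ⇨ x = x},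
      ∀ b ∈ {a : A | ∀ x ∈ X, x ⇨ a = a ∧ a ⇨ x = x},
        a ⊓ b ∈ {a : A | ∀ x ∈ X, x ⇨ a = a ∧ a ⇨ x = x}) ∧
    (∀ a ∈ {a : A | ∀ x ∈ X, x ⇨ a = a ∧ a ⇨ x = x},
      ∀ b ∈ {a : A | ∀ x ∈ X, x ⇨ a = a ∧ a ⇨ x = x},
        a ⇨ b ∈ {a : A | ∀ x ∈ X, x ⇨ a = a ∧ a ⇨ x = x}) ∧
    (∀ Y : Set A, (∀ y ∈ Y, ∀ x ∈ X, x ⇨ y = y ∧ y ⇨ x = x) →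
      Y ⊆ {a : A | ∀ x ∈ X, x ⇨ a = a ∧ a ⇨ x = x}) := by
  have self_le : ∀ a b : A, a ≤ b ⇨ a := fun a b => (adj a b a).1 inf_le_left
  have mp : ∀ a b : A, (a ⇨ b) ⊓ a ≤ b := fun a b => (adj _ _ _).2 le_rfl
  refine ⟨?_, ?_, ?_, ?_⟩
  · intro x _
    constructor
    · exact le_antisymm le_top ((adj ⊤ x ⊤).1 le_top)
    · refine le_antisymm ?_ (self_le x ⊤)
      have h := mp ⊤ x
      rwa [inf_top_eq] at h
  · intro a ha b hb x hx
    obtain ⟨hxa, hax⟩ := ha x hx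
    obtain ⟨hxb, hbx⟩ := hb x hx
    constructor
    · refine le_antisymm (le_inf ?_ ?_) (self_le _ _)
      · calc x ⇨ a ⊓ b ≤ x ⇨ a := (adj _ _ _).1 ((mp x (a ⊓ b)).trans inf_le_left)
          _ = a := hxa
      · calc x ⇨ a ⊓ b ≤ x ⇨ b := (adj _ _ _).1 ((mp x (a ⊓ b)).trans inf_le_right)
          _ = b := hxb
    · refine le_antisymm ?_ (self_le _ _)
      -- c := (a ⊓ b) ⇨ x, c ⊓ a ⊓ b ≤ x so c ⊓ a ≤ b ⇨ x = x so c ≤ a ⇨ x = x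
      have h1 : (a ⊓ b ⇨ x) ⊓ a ≤ b ⇨ x := by
        refine (adj _ _ _).1 ?_
        rw [inf_assoc]
        exact mp (a ⊓ b) x
      have h2 : (a ⊓ b ⇨ x) ⊓ a ≤ x := h1.trans_eq hbx
      calc a ⊓ b ⇨ x ≤ a ⇨ x := (adj _ _ _).1 h2
        _ = x := hax
  · intro a ha b hb x hx
    obtain ⟨hxa, hax⟩ := ha x hx
    obtain ⟨hxb, hbx⟩ := hb x hx
    constructor
    · refine le_antisymm ?_ (self_le _ _)
      -- c := x ⇨ (a ⇨ b); c ⊓ a ⊓ x ≤ b so c ⊓ a ≤ x ⇨ b = b so c ≤ a ⇨ b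
      have h1 : (x ⇨ a ⇨ b) ⊓ a ≤ x ⇨ b := by
        refine (adj _ _ _).1 ?_
        calc (x ⇨ a ⇨ b) ⊓ a ⊓ x = (x ⇨ a ⇨ b) ⊓ x ⊓ a := by
              rw [inf_assoc, inf_comm a x, ← inf_assoc]
          _ ≤ (a ⇨ b) ⊓ a := inf_le_inf_right a (mp x (a ⇨ b))
          _ ≤ b := mp a b
      exact (adj _ _ _).1 (h1.trans_eq hxb)
    · refine le_antisymm ?_ (self_le _ _)
      -- c := (a ⇨ b) ⇨ x; b ≤ a ⇨ b so c ⊓ b ≤ c ⊓ (a ⇨ b) ≤ x so c ≤ b ⇨ x = x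
      have h1 : ((a ⇨ b) ⇨ x) ⊓ b ≤ x :=
        (inf_le_inf_left _ (self_le b a)).trans (mp (a ⇨ b) x)
      calc (a ⇨ b) ⇨ x ≤ b ⇨ x := (adj _ _ _).1 h1
        _ = x := hbx
  · intro Y hY y hy x hx
    exact hY y hy x hx
end

section
/- Centralisers of normal subobjects are normal in Heyting semilattices: if X is a filter of a Heyting semilattice A, then the centraliser Z_A(X) = {a ∈ A | for all x ∈ X, x ⇨ a = a and a ⇨ x = x} is upward closed in A (hence, being nonempty and closed under ⊓, it is a filter of A). -/
/-- Centralisers of normal subobjects are normal in Heyting semilattices: if `X` is a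
filter of `A`, then `Z_A(X)` is upward closed in `A`, hence (being nonempty and closed
under `⊓`) a filter of `A`. -/
theorem centraliser_of_filter_is_filter {A : Type*} [SemilatticeInf A] [OrderTop A] [HImp A]
    (adj : ∀ a b c : A, a ⊓ b ≤ c ↔ a ≤ b ⇨ c) (X : Set A)
    (hne : X.Nonempty)
    (hmeet : ∀ x ∈ X, ∀ y ∈ X, x ⊓ y ∈ X)
    (hup : ∀ x ∈ X, ∀ y : A, x ≤ y → y ∈ X) :
    (∀ a ∈ {a : A | ∀ x ∈ X, x ⇨ a = a ∧ a ⇨ x = x}, ∀ b : A, a ≤ b →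
        b ∈ {a : A | ∀ x ∈ X, x ⇨ a = a ∧ a ⇨ x = x}) ∧
    {a : A | ∀ x ∈ X, x ⇨ a = a ∧ a ⇨ x = x}.Nonempty ∧
    (∀ a ∈ {a : A | ∀ x ∈ X, x ⇨ a = a ∧ a ⇨ x = x},
      ∀ b ∈ {a : A | ∀ x ∈ X, x ⇨ a = a ∧ a ⇨ x = x},
        a ⊓ b ∈ {a : A | ∀ x ∈ X, x ⇨ a = a ∧ a ⇨ x = x}) := by
  refine ⟨?_, ?_, ?_⟩
  · -- upward closure
    rintro a ha b hab x hx
    obtain ⟨hxa, hax⟩ := ha x hx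
    constructor
    · -- x ⇨ b = b
      set c := x ⇨ b with hc
      have hbc : b ≤ c := (adj b x b).1 inf_le_left
      have hcxb : c ⊓ x ≤ b := (adj c x b).2 le_rfl
      have hxd : x ≤ c ⇨ b := (adj x c b).1 (by rw [inf_comm]; exact hcxb)
      have hd : c ⇨ b ∈ X := hup x hx _ hxd
      have hacb : a ≤ c ⇨ b := (adj a c b).1 (le_trans inf_le_left hab)
      have htop : (⊤ : A) ≤ a ⇨ (c ⇨ b) :=
        (adj ⊤ a (c ⇨ b)).1 (le_trans inf_le_right hacb)
      have had : a ⇨ (c ⇨ b) = c ⇨ b := (ha _ hd).2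
      have hdtop : c ⇨ b = ⊤ := le_antisymm le_top (had ▸ htop)
      have hcb : c ≤ b := by
        have h1 : c ≤ c ⇨ b := hdtop ▸ le_top
        have h2 : c ⊓ c ≤ b := (adj c c b).2 h1
        simpa using h2
      exact le_antisymm hcb hbc
    · -- b ⇨ x = x
      have h1 : x ≤ b ⇨ x := (adj x b x).1 inf_le_left
      have h2 : b ⇨ x ≤ x := by
        have hbx : (b ⇨ x) ⊓ b ≤ x := (adj (b ⇨ x) b x).2 le_rfl
        have hax' : (b ⇨ x) ⊓ a ≤ x := le_trans (inf_le_inf_left _ hab) hbx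
        calc b ⇨ x ≤ a ⇨ x := (adj _ a x).1 hax'
          _ = x := hax
      exact le_antisymm h2 h1
  · -- nonempty: ⊤ is in the centraliser
    refine ⟨⊤, fun x hx => ⟨?_, ?_⟩⟩
    · exact le_antisymm le_top ((adj ⊤ x ⊤).1 le_top)
    · refine le_antisymm ?_ ((adj x ⊤ x).1 inf_le_left)
      have h := (adj (⊤ ⇨ x) ⊤ x).2 le_rfl
      exact le_trans (le_inf le_rfl le_top) h
  · -- closed under meet
    rintro a ha b hb x hx
    obtain ⟨hxa, hax⟩ := ha x hx
    obtain ⟨hxb, hbx⟩ := hb x hx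
    constructor
    · -- x ⇨ (a ⊓ b) = a ⊓ b
      refine le_antisymm ?_ ((adj (a ⊓ b) x (a ⊓ b)).1 inf_le_left)
      have h := (adj (x ⇨ (a ⊓ b)) x (a ⊓ b)).2 le_rfl
      have h1' : x ⇨ (a ⊓ b) ≤ x ⇨ a := (adj _ x a).1 (le_trans h inf_le_left)
      have h2' : x ⇨ (a ⊓ b) ≤ x ⇨ b := (adj _ x b).1 (le_trans h inf_le_right)
      rw [hxa] at h1'
      rw [hxb] at h2'
      exact le_inf h1' h2'
    · -- (a ⊓ b) ⇨ x = x
      refine le_antisymm ?_ ((adj x (a ⊓ b) x).1 inf_le_left)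
      have h : ((a ⊓ b) ⇨ x) ⊓ (a ⊓ b) ≤ x := (adj _ (a ⊓ b) x).2 le_rfl
      have h1 : ((a ⊓ b) ⇨ x) ⊓ a ⊓ b ≤ x := by
        rw [inf_assoc]; exact h
      have h2' : ((a ⊓ b) ⇨ x) ⊓ a ≤ b ⇨ x := (adj _ b x).1 h1
      rw [hbx] at h2'
      have h2 : ((a ⊓ b) ⇨ x) ⊓ a ≤ x := h2'
      calc (a ⊓ b) ⇨ x ≤ a ⇨ x := (adj _ a x).1 h2
        _ = x := hax
end

section
/- The pseudo-join captures commutativity: for elements x and y of a Heyting semilattice H, one has x ⋎ y = ⊤ if and only if x ⇨ y = y and y ⇨ x = x. Consequently, two sub-Heyting-semilattices X, Y of H pointwise commute if and only if x ⋎ y = ⊤ for all x ∈ X and y ∈ Y. -/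
/-- The pseudo-join of two elements of a Heyting semilattice. -/
def pseudoJoin {H : Type*} [SemilatticeInf H] [HImp H] (x y : H) : H :=
  ((x ⇨ y) ⇨ y) ⊓ ((y ⇨ x) ⇨ x)

/-- The pseudo-join captures commutativity: `x ⋎ y = ⊤` iff `x ⇨ y = y` and
`y ⇨ x = x`; consequently two sub-Heyting-semilattices pointwise commute iff all
pseudo-joins of their elements equal `⊤`. -/
theorem pseudoJoin_eq_top_iff {H : Type*} [SemilatticeInf H] [OrderTop H] [HImp H]
    (adj : ∀ a b c : H, a ⊓ b ≤ c ↔ a ≤ b ⇨ c) (X Y : Set H)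
    (hXtop : ⊤ ∈ X) (hXmeet : ∀ x ∈ X, ∀ x' ∈ X, x ⊓ x' ∈ X)
    (hXhimp : ∀ x ∈ X, ∀ x' ∈ X, x ⇨ x' ∈ X)
    (hYtop : ⊤ ∈ Y) (hYmeet : ∀ y ∈ Y, ∀ y' ∈ Y, y ⊓ y' ∈ Y)
    (hYhimp : ∀ y ∈ Y, ∀ y' ∈ Y, y ⇨ y' ∈ Y) :
    (∀ x y : H, pseudoJoin x y = ⊤ ↔ (x ⇨ y = y ∧ y ⇨ x = x)) ∧
    ((∀ x ∈ X, ∀ y ∈ Y, x ⇨ y = y ∧ y ⇨ x = x) ↔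
      (∀ x ∈ X, ∀ y ∈ Y, pseudoJoin x y = ⊤)) := by
  have self_le : ∀ a b : H, b ≤ a ⇨ b := fun a b => (adj b a b).mp inf_le_left
  have top_himp : ∀ a b : H, a ⇨ b = ⊤ ↔ a ≤ b := by
    intro a b
    constructor
    · intro h
      have := (adj ⊤ a b).mpr (h ▸ le_refl _)
      simpa using this
    · intro h
      exact le_antisymm le_top ((adj ⊤ a b).mp (le_trans inf_le_right h))
  have main : ∀ x y : H, pseudoJoin x y = ⊤ ↔ (x ⇨ y = y ∧ y ⇨ x = x) := by
    intro x y
    unfold pseudoJoin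
    rw [inf_eq_top_iff, top_himp, top_himp]
    constructor
    · rintro ⟨h1, h2⟩
      exact ⟨le_antisymm h1 (self_le x y), le_antisymm h2 (self_le y x)⟩
    · rintro ⟨h1, h2⟩
      exact ⟨h1.le, h2.le⟩
  refine ⟨main, ?_⟩
  constructor
  · intro h x hx y hy
    exact (main x y).mpr (h x hx y hy)
  · intro h x hx y hy
    exact (main x y).mp (h x hx y hy)
end

section
/- Implication distributes over the pseudo-join: for all elements x, y, z of a Heyting semilattice, x ⇨ (y ⋎ z) = (x ⇨ y) ⋎ (x ⇨ z). -/
section Aux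
variable {H : Type*} [SemilatticeInf H] [HImp H]
  (adj : ∀ a b c : H, a ⊓ b ≤ c ↔ a ≤ b ⇨ c)

include adj in
private lemma mp' (a b : H) : (a ⇨ b) ⊓ a ≤ b := (adj _ _ _).2 le_rfl

include adj in
private lemma himp_inf' (x p q : H) : x ⇨ (p ⊓ q) = (x ⇨ p) ⊓ (x ⇨ q) := by
  apply le_antisymm
  · exact le_inf ((adj _ _ _).1 ((mp' adj _ _).trans inf_le_left))
      ((adj _ _ _).1 ((mp' adj _ _).trans inf_le_right))
  · refine (adj _ _ _).1 (le_inf ?_ ?_)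
    · exact (inf_le_inf_right x inf_le_left).trans (mp' adj _ _)
    · exact (inf_le_inf_right x inf_le_right).trans (mp' adj _ _)

include adj in
private lemma key (x y z : H) :
    x ⇨ ((y ⇨ z) ⇨ z) = ((x ⇨ y) ⇨ (x ⇨ z)) ⇨ (x ⇨ z) := by
  set A := x ⇨ ((y ⇨ z) ⇨ z) with hA
  set B := (x ⇨ y) ⇨ (x ⇨ z) with hB
  have hyzB : (y ⇨ z) ≤ B := by
    refine (adj _ _ _).1 ((adj _ _ _).1 ?_)
    calc (y ⇨ z) ⊓ (x ⇨ y) ⊓ x ≤ (y ⇨ z) ⊓ ((x ⇨ y) ⊓ x) := by rw [inf_assoc]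
      _ ≤ (y ⇨ z) ⊓ y := inf_le_inf_left _ (mp' adj _ _)
      _ ≤ z := inf_comm (y ⇨ z) y ▸ mp' adj y z
  apply le_antisymm
  · refine (adj _ _ _).1 ((adj _ _ _).1 ?_)
    -- A ⊓ B ⊓ x ≤ z
    have h1 : A ⊓ B ⊓ x ≤ y ⇨ z := by
      refine (adj _ _ _).1 ?_
      calc A ⊓ B ⊓ x ⊓ y ≤ B ⊓ x ⊓ (x ⇨ y) := by
            refine le_inf (le_inf ?_ ?_) ?_
            · exact (inf_le_left.trans (inf_le_left.trans inf_le_right))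
            · exact inf_le_left.trans inf_le_right
            · exact inf_le_right.trans ((adj _ _ _).1 inf_le_left)
        _ = B ⊓ (x ⇨ y) ⊓ x := by rw [inf_assoc, inf_comm x, ← inf_assoc]
        _ ≤ (x ⇨ z) ⊓ x := inf_le_inf_right _ (mp' adj _ _)
        _ ≤ z := mp' adj _ _
    have h2 : A ⊓ B ⊓ x ≤ (y ⇨ z) ⇨ z := by
      refine le_trans ?_ (mp' adj x ((y ⇨ z) ⇨ z))
      exact le_inf (inf_le_left.trans inf_le_left) inf_le_right
    calc A ⊓ B ⊓ x ≤ ((y ⇨ z) ⇨ z) ⊓ (y ⇨ z) := le_inf h2 h1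
      _ ≤ z := mp' adj _ _
  · refine (adj _ _ _).1 ((adj _ _ _).1 ?_)
    -- (B ⇨ (x⇨z)) ⊓ x ⊓ (y⇨z) ≤ z
    calc (B ⇨ (x ⇨ z)) ⊓ x ⊓ (y ⇨ z)
        ≤ (B ⇨ (x ⇨ z)) ⊓ B ⊓ x := by
          refine le_inf (le_inf (inf_le_left.trans inf_le_left)
            (inf_le_right.trans hyzB)) (inf_le_left.trans inf_le_right)
      _ ≤ (x ⇨ z) ⊓ x := inf_le_inf_right _ (mp' adj _ _)
      _ ≤ z := mp' adj _ _

end Aux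

/-- Implication distributes over the pseudo-join. -/
theorem himp_pseudoJoin {H : Type*} [SemilatticeInf H] [OrderTop H] [HImp H]
    (adj : ∀ a b c : H, a ⊓ b ≤ c ↔ a ≤ b ⇨ c) (x y z : H) :
    x ⇨ pseudoJoin y z = pseudoJoin (x ⇨ y) (x ⇨ z) := by
  unfold pseudoJoin
  rw [himp_inf' adj, key adj x y z, key adj x z y]
end

section
/- Join of commuting subobjects in Heyting semilattices: let X and Y be sub-Heyting-semilattices of a Heyting semilattice A that pointwise commute. Then for all x, x' ∈ X and y, y' ∈ Y one has (x ⊓ y) ⇨ (x' ⊓ y') = (x ⇨ x') ⊓ (y ⇨ y'); consequently the set {x ⊓ y | x ∈ X, y ∈ Y} is a sub-Heyting-semilattice of A (and is the join of X and Y, being the smallest sub-Heyting-semilattice containing both). -/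
/-- Join of commuting subobjects in Heyting semilattices: if sub-Heyting-semilattices
`X` and `Y` of `A` pointwise commute, then meets of pairs satisfy
`(x ⊓ y) ⇨ (x' ⊓ y') = (x ⇨ x') ⊓ (y ⇨ y')`, and the set of such meets is the join of
`X` and `Y`: the smallest sub-Heyting-semilattice of `A` containing both. -/
theorem join_of_commuting {A : Type*} [SemilatticeInf A] [OrderTop A] [HImp A]
    (adj : ∀ a b c : A, a ⊓ b ≤ c ↔ a ≤ b ⇨ c) (X Y : Set A)
    (hXtop : ⊤ ∈ X) (hXmeet : ∀ x ∈ X, ∀ x' ∈ X, x ⊓ x' ∈ X)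
    (hXhimp : ∀ x ∈ X, ∀ x' ∈ X, x ⇨ x' ∈ X)
    (hYtop : ⊤ ∈ Y) (hYmeet : ∀ y ∈ Y, ∀ y' ∈ Y, y ⊓ y' ∈ Y)
    (hYhimp : ∀ y ∈ Y, ∀ y' ∈ Y, y ⇨ y' ∈ Y)
    (hcomm : ∀ x ∈ X, ∀ y ∈ Y, x ⇨ y = y ∧ y ⇨ x = x) :
    (∀ x ∈ X, ∀ x' ∈ X, ∀ y ∈ Y, ∀ y' ∈ Y,
        (x ⊓ y) ⇨ (x' ⊓ y') = (x ⇨ x') ⊓ (y ⇨ y')) ∧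
    (⊤ ∈ {a : A | ∃ x ∈ X, ∃ y ∈ Y, a = x ⊓ y} ∧
      (∀ a ∈ {a : A | ∃ x ∈ X, ∃ y ∈ Y, a = x ⊓ y},
        ∀ b ∈ {a : A | ∃ x ∈ X, ∃ y ∈ Y, a = x ⊓ y},
          a ⊓ b ∈ {a : A | ∃ x ∈ X, ∃ y ∈ Y, a = x ⊓ y}) ∧
      (∀ a ∈ {a : A | ∃ x ∈ X, ∃ y ∈ Y, a = x ⊓ y},
        ∀ b ∈ {a : A | ∃ x ∈ X, ∃ y ∈ Y, a = x ⊓ y},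
          a ⇨ b ∈ {a : A | ∃ x ∈ X, ∃ y ∈ Y, a = x ⊓ y})) ∧
    X ⊆ {a : A | ∃ x ∈ X, ∃ y ∈ Y, a = x ⊓ y} ∧
    Y ⊆ {a : A | ∃ x ∈ X, ∃ y ∈ Y, a = x ⊓ y} ∧
    (∀ T : Set A,
      (⊤ ∈ T ∧ (∀ s ∈ T, ∀ t ∈ T, s ⊓ t ∈ T) ∧ (∀ s ∈ T, ∀ t ∈ T, s ⇨ t ∈ T)) →
      X ⊆ T → Y ⊆ T → {a : A | ∃ x ∈ X, ∃ y ∈ Y, a = x ⊓ y} ⊆ T) := by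
  have mp : ∀ b c : A, (b ⇨ c) ⊓ b ≤ c := fun b c => (adj _ _ _).2 le_rfl
  have key : ∀ x ∈ X, ∀ x' ∈ X, ∀ y ∈ Y, ∀ y' ∈ Y,
      (x ⊓ y) ⇨ (x' ⊓ y') = (x ⇨ x') ⊓ (y ⇨ y') := by
    intro x hx x' hx' y hy y' hy'
    apply le_antisymm
    · have h1 : ((x ⊓ y) ⇨ (x' ⊓ y')) ⊓ (x ⊓ y) ≤ x' ⊓ y' := mp _ _
      apply le_inf
      · -- LHS ≤ x ⇨ x'
        rw [← adj]
        have : (((x ⊓ y) ⇨ (x' ⊓ y')) ⊓ x) ⊓ y ≤ x' := by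
          calc (((x ⊓ y) ⇨ (x' ⊓ y')) ⊓ x) ⊓ y
              = ((x ⊓ y) ⇨ (x' ⊓ y')) ⊓ (x ⊓ y) := by rw [inf_assoc]
            _ ≤ x' ⊓ y' := h1
            _ ≤ x' := inf_le_left
        have := (adj _ _ _).1 this
        rwa [(hcomm x' hx' y hy).2] at this
      · rw [← adj]
        have : (((x ⊓ y) ⇨ (x' ⊓ y')) ⊓ y) ⊓ x ≤ y' := by
          calc (((x ⊓ y) ⇨ (x' ⊓ y')) ⊓ y) ⊓ x
              = ((x ⊓ y) ⇨ (x' ⊓ y')) ⊓ (x ⊓ y) := by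
                rw [inf_assoc, inf_comm y x]
            _ ≤ x' ⊓ y' := h1
            _ ≤ y' := inf_le_right
        have := (adj _ _ _).1 this
        rwa [(hcomm x hx y' hy').1] at this
    · rw [← adj]
      calc ((x ⇨ x') ⊓ (y ⇨ y')) ⊓ (x ⊓ y)
          = ((x ⇨ x') ⊓ x) ⊓ ((y ⇨ y') ⊓ y) := inf_inf_inf_comm _ _ _ _
        _ ≤ x' ⊓ y' := inf_le_inf (mp _ _) (mp _ _)
  refine ⟨key, ⟨⟨⊤, hXtop, ⊤, hYtop, (inf_idem ⊤).symm⟩, ?_, ?_⟩, ?_, ?_, ?_⟩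
  · rintro a ⟨x, hx, y, hy, rfl⟩ b ⟨x', hx', y', hy', rfl⟩
    exact ⟨x ⊓ x', hXmeet x hx x' hx', y ⊓ y', hYmeet y hy y' hy', by
      rw [inf_inf_inf_comm]⟩
  · rintro a ⟨x, hx, y, hy, rfl⟩ b ⟨x', hx', y', hy', rfl⟩
    exact ⟨x ⇨ x', hXhimp x hx x' hx', y ⇨ y', hYhimp y hy y' hy',
      key x hx x' hx' y hy y' hy'⟩
  · exact fun x hx => ⟨x, hx, ⊤, hYtop, (inf_top_eq x).symm⟩
  · exact fun y hy => ⟨⊤, hXtop, y, hy, (top_inf_eq y).symm⟩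
  · rintro T ⟨_, hTmeet, _⟩ hXT hYT a ⟨x, hx, y, hy, rfl⟩
    exact hTmeet x (hXT hx) y (hYT hy)
end

section
/- Let X₁ and X₂ be upward-closed subsets of a Heyting semilattice A that pointwise commute. Then for each x₁ ∈ X₁, x₂ ∈ X₂ and b ∈ A, one has (x₁ ⇨ b) ⊓ (x₂ ⇨ b) = b. -/
/-- For upward-closed, pointwise commuting subsets `X₁`, `X₂` of a Heyting
semilattice: `(x₁ ⇨ b) ⊓ (x₂ ⇨ b) = b`. -/
theorem himp_inf_himp_eq {A : Type*} [SemilatticeInf A] [OrderTop A] [HImp A]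
    (adj : ∀ a b c : A, a ⊓ b ≤ c ↔ a ≤ b ⇨ c) (X₁ X₂ : Set A)
    (hup₁ : ∀ x ∈ X₁, ∀ y : A, x ≤ y → y ∈ X₁)
    (hup₂ : ∀ x ∈ X₂, ∀ y : A, x ≤ y → y ∈ X₂)
    (hcomm : ∀ x ∈ X₁, ∀ y ∈ X₂, x ⇨ y = y ∧ y ⇨ x = x)
    (x₁ : A) (hx₁ : x₁ ∈ X₁) (x₂ : A) (hx₂ : x₂ ∈ X₂) (b : A) :
    (x₁ ⇨ b) ⊓ (x₂ ⇨ b) = b := by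
  set c := (x₁ ⇨ b) ⊓ (x₂ ⇨ b) with hc
  have hb : b ≤ c := le_inf ((adj b x₁ b).mp inf_le_left) ((adj b x₂ b).mp inf_le_left)
  set d := c ⇨ b with hd
  have h1 : x₁ ≤ d := by
    apply (adj x₁ c b).mp
    calc x₁ ⊓ c ≤ (x₁ ⇨ b) ⊓ x₁ := le_inf (le_trans inf_le_right inf_le_left) inf_le_left
    _ ≤ b := (adj (x₁ ⇨ b) x₁ b).mpr le_rfl
  have h2 : x₂ ≤ d := by
    apply (adj x₂ c b).mp
    calc x₂ ⊓ c ≤ (x₂ ⇨ b) ⊓ x₂ := le_inf (le_trans inf_le_right inf_le_right) inf_le_left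
    _ ≤ b := (adj (x₂ ⇨ b) x₂ b).mpr le_rfl
  have hd₁ : d ∈ X₁ := hup₁ x₁ hx₁ d h1
  have hd₂ : d ∈ X₂ := hup₂ x₂ hx₂ d h2
  have hdd : d ⇨ d = d := (hcomm d hd₁ d hd₂).1
  have htop : (⊤ : A) ≤ d := hdd ▸ (adj ⊤ d d).mp inf_le_right
  have hcb : c ≤ b := le_trans (le_inf le_top le_rfl) ((adj ⊤ c b).mpr htop)
  exact le_antisymm hcb hb
end

section
/- Let X₁ and X₂ be upward-closed subsets of a Heyting semilattice A that pointwise commute. Then for each x₁ ∈ X₁, x₂ ∈ X₂ and b, b' ∈ A, one has ((x₁ ⊓ x₂) ⇨ b) ⇨ b' = (x₂ ⇨ ((x₁ ⇨ b) ⇨ b')) ⊓ (x₁ ⇨ ((x₂ ⇨ b) ⇨ b')). -/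
/-- For upward-closed, pointwise commuting subsets `X₁`, `X₂` of a Heyting semilattice:
`((x₁ ⊓ x₂) ⇨ b) ⇨ b' = (x₂ ⇨ ((x₁ ⇨ b) ⇨ b')) ⊓ (x₁ ⇨ ((x₂ ⇨ b) ⇨ b'))`. -/
theorem himp_himp_decomposition {A : Type*} [SemilatticeInf A] [OrderTop A] [HImp A]
    (adj : ∀ a b c : A, a ⊓ b ≤ c ↔ a ≤ b ⇨ c) (X₁ X₂ : Set A)
    (hup₁ : ∀ x ∈ X₁, ∀ y : A, x ≤ y → y ∈ X₁)
    (hup₂ : ∀ x ∈ X₂, ∀ y : A, x ≤ y → y ∈ X₂)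
    (hcomm : ∀ x ∈ X₁, ∀ y ∈ X₂, x ⇨ y = y ∧ y ⇨ x = x)
    (x₁ : A) (hx₁ : x₁ ∈ X₁) (x₂ : A) (hx₂ : x₂ ∈ X₂) (b b' : A) :
    ((x₁ ⊓ x₂) ⇨ b) ⇨ b' =
      (x₂ ⇨ ((x₁ ⇨ b) ⇨ b')) ⊓ (x₁ ⇨ ((x₂ ⇨ b) ⇨ b')) := by
  -- modus ponens
  have mp : ∀ p q : A, (p ⇨ q) ⊓ p ≤ q := fun p q => (adj _ _ _).mpr le_rfl
  set u := x₁ ⇨ b with hu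
  set v := x₂ ⇨ b with hv
  set w := (x₁ ⊓ x₂) ⇨ b with hw
  -- u ≤ w and v ≤ w
  have hu_w : u ≤ w := by
    refine (adj _ _ _).mp ?_
    calc u ⊓ (x₁ ⊓ x₂) ≤ (u ⊓ x₁) ⊓ x₂ := by rw [inf_assoc]
      _ ≤ u ⊓ x₁ := inf_le_left
      _ ≤ b := mp _ _
  have hv_w : v ≤ w := by
    refine (adj _ _ _).mp ?_
    calc v ⊓ (x₁ ⊓ x₂) ≤ v ⊓ x₂ := inf_le_inf_left _ inf_le_right
      _ ≤ b := mp _ _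
  -- forward direction
  have h1 : w ⇨ b' ≤ x₂ ⇨ (u ⇨ b') := by
    refine (adj _ _ _).mp ((adj _ _ _).mp ?_)
    calc (w ⇨ b') ⊓ x₂ ⊓ u ≤ (w ⇨ b') ⊓ u := inf_le_inf_right _ inf_le_left
      _ ≤ (w ⇨ b') ⊓ w := inf_le_inf_left _ hu_w
      _ ≤ b' := mp _ _
  have h2 : w ⇨ b' ≤ x₁ ⇨ (v ⇨ b') := by
    refine (adj _ _ _).mp ((adj _ _ _).mp ?_)
    calc (w ⇨ b') ⊓ x₁ ⊓ v ≤ (w ⇨ b') ⊓ v := inf_le_inf_right _ inf_le_left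
      _ ≤ (w ⇨ b') ⊓ w := inf_le_inf_left _ hv_w
      _ ≤ b' := mp _ _
  -- backward direction
  set t := (x₂ ⇨ (u ⇨ b')) ⊓ (x₁ ⇨ (v ⇨ b')) with ht
  have h3 : t ≤ w ⇨ b' := by
    refine (adj _ _ _).mp ?_
    set d := t ⊓ w with hd
    -- d ⊓ x₁ ≤ b'
    have hwx1 : w ⊓ x₁ ≤ v := by
      refine (adj _ _ _).mp ?_
      calc w ⊓ x₁ ⊓ x₂ = w ⊓ (x₁ ⊓ x₂) := by rw [inf_assoc]
        _ ≤ b := mp _ _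
    have hwx2 : w ⊓ x₂ ≤ u := by
      refine (adj _ _ _).mp ?_
      calc w ⊓ x₂ ⊓ x₁ = w ⊓ (x₁ ⊓ x₂) := by rw [inf_assoc, inf_comm x₂ x₁]
        _ ≤ b := mp _ _
    have hd1 : d ⊓ x₁ ≤ b' := by
      have hdv : d ⊓ x₁ ≤ v := le_trans (inf_le_inf_right _ inf_le_right) hwx1
      have hdp : d ⊓ x₁ ≤ v ⇨ b' := by
        calc d ⊓ x₁ ≤ (x₁ ⇨ (v ⇨ b')) ⊓ x₁ :=
              inf_le_inf_right _ (le_trans inf_le_left inf_le_right)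
          _ ≤ v ⇨ b' := mp _ _
      calc d ⊓ x₁ ≤ (v ⇨ b') ⊓ v := le_inf hdp hdv
        _ ≤ b' := mp _ _
    have hd2 : d ⊓ x₂ ≤ b' := by
      have hdu : d ⊓ x₂ ≤ u := le_trans (inf_le_inf_right _ inf_le_right) hwx2
      have hdp : d ⊓ x₂ ≤ u ⇨ b' := by
        calc d ⊓ x₂ ≤ (x₂ ⇨ (u ⇨ b')) ⊓ x₂ :=
              inf_le_inf_right _ (le_trans inf_le_left inf_le_left)
          _ ≤ u ⇨ b' := mp _ _
      calc d ⊓ x₂ ≤ (u ⇨ b') ⊓ u := le_inf hdp hdu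
        _ ≤ b' := mp _ _
    -- m := d ⇨ b' is above x₁ and x₂, hence equals ⊤
    set m := d ⇨ b' with hm
    have hx1m : x₁ ≤ m := (adj _ _ _).mp (le_trans (le_of_eq (inf_comm _ _)) hd1)
    have hx2m : x₂ ≤ m := (adj _ _ _).mp (le_trans (le_of_eq (inf_comm _ _)) hd2)
    have hmX₁ : m ∈ X₁ := hup₁ x₁ hx₁ m hx1m
    have hmX₂ : m ∈ X₂ := hup₂ x₂ hx₂ m hx2m
    have hmm : m ⇨ m = m := (hcomm m hmX₁ m hmX₂).1
    have htop : (⊤ : A) ≤ m ⇨ m := (adj _ _ _).mp inf_le_right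
    have hmtop : m = ⊤ := le_antisymm le_top (hmm ▸ htop)
    have : d ≤ m := hmtop ▸ le_top
    calc d ≤ (d ⇨ b') ⊓ d := le_inf this le_rfl
      _ ≤ b' := mp _ _
  exact le_antisymm (le_inf h1 h2) h3
end

section
/- Let X₁ and X₂ be upward-closed subsets of a Heyting semilattice A that pointwise commute. Then for each x₁ ∈ X₁, x₂ ∈ X₂ and b, b' ∈ A with b ≤ b', one has ((x₁ ⊓ x₂) ⇨ b) ⇨ b' = ((x₁ ⇨ b) ⇨ b') ⊓ ((x₂ ⇨ b) ⇨ b'). -/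
/-- For upward-closed, pointwise commuting subsets `X₁`, `X₂` of a Heyting semilattice,
and `b ≤ b'`: `((x₁ ⊓ x₂) ⇨ b) ⇨ b' = ((x₁ ⇨ b) ⇨ b') ⊓ ((x₂ ⇨ b) ⇨ b')`. -/
theorem himp_himp_decomposition_of_le {A : Type*} [SemilatticeInf A] [OrderTop A] [HImp A]
    (adj : ∀ a b c : A, a ⊓ b ≤ c ↔ a ≤ b ⇨ c) (X₁ X₂ : Set A)
    (hup₁ : ∀ x ∈ X₁, ∀ y : A, x ≤ y → y ∈ X₁)
    (hup₂ : ∀ x ∈ X₂, ∀ y : A, x ≤ y → y ∈ X₂)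
    (hcomm : ∀ x ∈ X₁, ∀ y ∈ X₂, x ⇨ y = y ∧ y ⇨ x = x)
    (x₁ : A) (hx₁ : x₁ ∈ X₁) (x₂ : A) (hx₂ : x₂ ∈ X₂) (b b' : A) (hbb' : b ≤ b') :
    ((x₁ ⊓ x₂) ⇨ b) ⇨ b' = ((x₁ ⇨ b) ⇨ b') ⊓ ((x₂ ⇨ b) ⇨ b') := by
  -- modus ponens from the adjunction: (p ⇨ q) ⊓ p ≤ q
  have mp : ∀ p q : A, (p ⇨ q) ⊓ p ≤ q := fun p q => (adj _ _ _).mpr le_rfl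
  set c := (x₁ ⊓ x₂) ⇨ b with hc
  set m₁ := (x₁ ⇨ b) ⇨ b' with hm₁
  set m₂ := (x₂ ⇨ b) ⇨ b' with hm₂
  -- easy direction
  have h₁ : x₁ ⇨ b ≤ c := (adj _ _ _).mp ((inf_le_inf_left _ inf_le_left).trans (mp x₁ b))
  have h₂ : x₂ ⇨ b ≤ c := (adj _ _ _).mp ((inf_le_inf_left _ inf_le_right).trans (mp x₂ b))
  have easy₁ : c ⇨ b' ≤ m₁ :=
    (adj _ _ _).mp ((inf_le_inf_left _ h₁).trans (mp c b'))
  have easy₂ : c ⇨ b' ≤ m₂ :=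
    (adj _ _ _).mp ((inf_le_inf_left _ h₂).trans (mp c b'))
  refine le_antisymm (le_inf easy₁ easy₂) ?_
  -- hard direction: m₁ ⊓ m₂ ≤ c ⇨ b'
  rw [← adj]
  set t := m₁ ⊓ m₂ ⊓ c with ht
  set u := x₂ ⇨ (x₁ ⊓ x₂) with hu
  set v := x₁ ⇨ (x₁ ⊓ x₂) with hv
  have hx1u : x₁ ≤ u := (adj _ _ _).mp le_rfl
  have hx2v : x₂ ≤ v := (adj _ _ _).mp (inf_comm x₂ x₁).le
  have huX : u ∈ X₁ := hup₁ _ hx₁ _ hx1u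
  have hvX : v ∈ X₂ := hup₂ _ hx₂ _ hx2v
  have hux : u ⊓ x₂ ≤ x₁ ⊓ x₂ := (adj _ _ _).mpr le_rfl
  have hvx : v ⊓ x₁ ≤ x₁ ⊓ x₂ := (adj _ _ _).mpr le_rfl
  -- c ⊓ u ≤ x₂ ⇨ b and c ⊓ v ≤ x₁ ⇨ b
  have hcu : c ⊓ u ≤ x₂ ⇨ b := by
    rw [← adj]
    have step : c ⊓ u ⊓ x₂ ≤ c ⊓ (x₁ ⊓ x₂) :=
      le_inf (inf_le_left.trans inf_le_left)
        ((le_inf (inf_le_left.trans inf_le_right) inf_le_right).trans hux)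
    exact step.trans (mp (x₁ ⊓ x₂) b)
  have hcv : c ⊓ v ≤ x₁ ⇨ b := by
    rw [← adj]
    have step : c ⊓ v ⊓ x₁ ≤ c ⊓ (x₁ ⊓ x₂) :=
      le_inf (inf_le_left.trans inf_le_left)
        ((le_inf (inf_le_left.trans inf_le_right) inf_le_right).trans hvx)
    exact step.trans (mp (x₁ ⊓ x₂) b)
  -- hence t ⊓ u ≤ b' and t ⊓ v ≤ b'
  have htu : t ⊓ u ≤ b' := by
    have step : t ⊓ u ≤ m₂ ⊓ (x₂ ⇨ b) :=
      le_inf (inf_le_left.trans (inf_le_left.trans inf_le_right))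
        ((le_inf (inf_le_left.trans inf_le_right) inf_le_right).trans hcu)
    exact step.trans (mp (x₂ ⇨ b) b')
  have htv : t ⊓ v ≤ b' := by
    have step : t ⊓ v ≤ m₁ ⊓ (x₁ ⇨ b) :=
      le_inf (inf_le_left.trans (inf_le_left.trans inf_le_left))
        ((le_inf (inf_le_left.trans inf_le_right) inf_le_right).trans hcv)
    exact step.trans (mp (x₁ ⇨ b) b')
  -- r := t ⇨ b' lies in both X₁ and X₂, so it commutes with itself
  have hur : u ≤ t ⇨ b' := (adj _ _ _).mp ((inf_comm u t).le.trans htu)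
  have hvr : v ≤ t ⇨ b' := (adj _ _ _).mp ((inf_comm v t).le.trans htv)
  have hrX₁ : (t ⇨ b') ∈ X₁ := hup₁ _ huX _ hur
  have hrX₂ : (t ⇨ b') ∈ X₂ := hup₂ _ hvX _ hvr
  have hrr : (t ⇨ b') ⇨ (t ⇨ b') = t ⇨ b' := (hcomm _ hrX₁ _ hrX₂).1
  have htr : t ≤ t ⇨ b' := by
    have h : t ≤ (t ⇨ b') ⇨ (t ⇨ b') := (adj _ _ _).mp inf_le_right
    rwa [hrr] at h
  have hfin : t ⊓ t ≤ b' := (adj _ _ _).mpr htr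
  simpa using hfin
end

section
/- Let X₁ and X₂ be upward-closed subsets of a Heyting semilattice A that pointwise commute. Then for each x₁, x₁' ∈ X₁, x₂, x₂' ∈ X₂ and b ∈ A, one has ((x₁ ⊓ x₂) ⇨ b) ⇨ x₂' = (x₂ ⇨ b) ⇨ x₂', and consequently ((x₁ ⊓ x₂) ⇨ b) ⇨ (x₁' ⊓ x₂') = ((x₁ ⇨ b) ⇨ x₁') ⊓ ((x₂ ⇨ b) ⇨ x₂'). -/
private lemma himp_aux_cancel {A : Type*} [SemilatticeInf A] [HImp A]
    (adj : ∀ a b c : A, a ⊓ b ≤ c ↔ a ≤ b ⇨ c) (u w t b : A) (h : u ⇨ t = t) :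
    ((u ⊓ w) ⇨ b) ⇨ t = (w ⇨ b) ⇨ t := by
  have mp : ∀ a c : A, (a ⇨ c) ⊓ a ≤ c := fun a c => (adj _ _ _).mpr le_rfl
  apply le_antisymm
  · -- w ⇨ b ≤ (u ⊓ w) ⇨ b, then antitone
    have h1 : w ⇨ b ≤ (u ⊓ w) ⇨ b :=
      (adj _ _ _).mp (le_trans (inf_le_inf_left _ inf_le_right) (mp w b))
    refine (adj _ _ _).mp ?_
    exact le_trans (inf_le_inf_left _ h1) (mp _ t)
  · -- via u ⇨ t = t
    refine (adj _ _ _).mp ?_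
    have h2 : u ⊓ ((u ⊓ w) ⇨ b) ≤ w ⇨ b := by
      refine (adj _ _ _).mp ?_
      calc u ⊓ ((u ⊓ w) ⇨ b) ⊓ w ≤ ((u ⊓ w) ⇨ b) ⊓ (u ⊓ w) := by
            refine le_inf (le_trans inf_le_left inf_le_right) (le_inf ?_ inf_le_right)
            exact le_trans inf_le_left inf_le_left
        _ ≤ b := mp _ _
    have h3 : ((w ⇨ b) ⇨ t) ⊓ ((u ⊓ w) ⇨ b) ≤ u ⇨ t := by
      refine (adj _ _ _).mp ?_
      calc ((w ⇨ b) ⇨ t) ⊓ ((u ⊓ w) ⇨ b) ⊓ u ≤ ((w ⇨ b) ⇨ t) ⊓ (w ⇨ b) := by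
            refine le_inf (le_trans inf_le_left inf_le_left) ?_
            refine le_trans ?_ h2
            exact le_inf inf_le_right (le_trans inf_le_left inf_le_right)
        _ ≤ t := mp _ _
    exact h3.trans h.le

private lemma himp_inf_distrib_aux {A : Type*} [SemilatticeInf A] [HImp A]
    (adj : ∀ a b c : A, a ⊓ b ≤ c ↔ a ≤ b ⇨ c) (c p q : A) :
    c ⇨ (p ⊓ q) = (c ⇨ p) ⊓ (c ⇨ q) := by
  have mp : ∀ a c : A, (a ⇨ c) ⊓ a ≤ c := fun a c => (adj _ _ _).mpr le_rfl
  apply le_antisymm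
  · exact le_inf ((adj _ _ _).mp (le_trans (mp _ _) inf_le_left))
      ((adj _ _ _).mp (le_trans (mp _ _) inf_le_right))
  · refine (adj _ _ _).mp (le_inf ?_ ?_)
    · exact le_trans (inf_le_inf_right _ inf_le_left) (mp c p)
    · exact le_trans (inf_le_inf_right _ inf_le_right) (mp c q)


/-- For upward-closed, pointwise commuting subsets `X₁`, `X₂` of a Heyting semilattice:
`((x₁ ⊓ x₂) ⇨ b) ⇨ x₂' = (x₂ ⇨ b) ⇨ x₂'` and consequently
`((x₁ ⊓ x₂) ⇨ b) ⇨ (x₁' ⊓ x₂') = ((x₁ ⇨ b) ⇨ x₁') ⊓ ((x₂ ⇨ b) ⇨ x₂')`. -/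
theorem himp_himp_into_meet {A : Type*} [SemilatticeInf A] [OrderTop A] [HImp A]
    (adj : ∀ a b c : A, a ⊓ b ≤ c ↔ a ≤ b ⇨ c) (X₁ X₂ : Set A)
    (hup₁ : ∀ x ∈ X₁, ∀ y : A, x ≤ y → y ∈ X₁)
    (hup₂ : ∀ x ∈ X₂, ∀ y : A, x ≤ y → y ∈ X₂)
    (hcomm : ∀ x ∈ X₁, ∀ y ∈ X₂, x ⇨ y = y ∧ y ⇨ x = x)
    (x₁ : A) (hx₁ : x₁ ∈ X₁) (x₁' : A) (hx₁' : x₁' ∈ X₁)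
    (x₂ : A) (hx₂ : x₂ ∈ X₂) (x₂' : A) (hx₂' : x₂' ∈ X₂) (b : A) :
    ((x₁ ⊓ x₂) ⇨ b) ⇨ x₂' = (x₂ ⇨ b) ⇨ x₂' ∧
    ((x₁ ⊓ x₂) ⇨ b) ⇨ (x₁' ⊓ x₂') = ((x₁ ⇨ b) ⇨ x₁') ⊓ ((x₂ ⇨ b) ⇨ x₂') := by
  have h1 : ((x₁ ⊓ x₂) ⇨ b) ⇨ x₂' = (x₂ ⇨ b) ⇨ x₂' :=
    himp_aux_cancel adj x₁ x₂ x₂' b (hcomm x₁ hx₁ x₂' hx₂').1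
  have h2 : ((x₁ ⊓ x₂) ⇨ b) ⇨ x₁' = (x₁ ⇨ b) ⇨ x₁' := by
    rw [inf_comm]
    exact himp_aux_cancel adj x₂ x₁ x₁' b (hcomm x₁' hx₁' x₂ hx₂).2
  exact ⟨h1, by rw [himp_inf_distrib_aux adj, h1, h2]⟩
end

section
/- Failure of normality of unions in Heyting semilattices: there exists a finite Heyting semilattice A together with sub-Heyting-semilattices X, B, C of A such that X ⊆ B, X ⊆ C, X is upward closed in B (x ∈ X, b ∈ B, x ≤ b imply b ∈ X) and upward closed in C, the smallest sub-Heyting-semilattice of A containing B ∪ C is A itself, and yet X is not upward closed in A. (For instance A = C₄ × C₄, the square of the four-element chain, with X = {(2,2),(3,3)}, B = {(0,1),(2,2),(3,3)}, C = {(1,0),(2,2),(3,3)}.) -/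
universe u

/-- A sub-Heyting-semilattice: a subset containing `⊤` and closed under `⊓` and `⇨`. -/
def IsSubHSL {A : Type u} [SemilatticeInf A] [OrderTop A] [HImp A] (S : Set A) : Prop :=
  ⊤ ∈ S ∧ (∀ x ∈ S, ∀ y ∈ S, x ⊓ y ∈ S) ∧ (∀ x ∈ S, ∀ y ∈ S, x ⇨ y ∈ S)

/-- The four-element chain with its Heyting implication. -/
instance Fin4.instHImp : HImp (Fin 4) := ⟨fun a b => if a ≤ b then 3 else b⟩

/-- The square of the four-element chain. -/
abbrev P : Type := Fin 4 × Fin 4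

def Xs : Set P := {a | a = (2, 2) ∨ a = (3, 3)}
def Bs : Set P := {a | a = (0, 1) ∨ a = (2, 2) ∨ a = (3, 3)}
def Cs : Set P := {a | a = (1, 0) ∨ a = (2, 2) ∨ a = (3, 3)}

instance : DecidablePred (· ∈ Xs) := fun a => inferInstanceAs (Decidable (_ ∨ _))
instance : DecidablePred (· ∈ Bs) := fun a => inferInstanceAs (Decidable (_ ∨ _))
instance : DecidablePred (· ∈ Cs) := fun a => inferInstanceAs (Decidable (_ ∨ _))

/-- Failure of normality of unions in Heyting semilattices: there is a finite Heyting
semilattice `A` with sub-Heyting-semilattices `X ⊆ B`, `X ⊆ C` such that `X` is upward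
closed in `B` and in `C`, the sub-Heyting-semilattice generated by `B ∪ C` is all of
`A`, and yet `X` is not upward closed in `A`. -/
theorem not_normality_of_unions :
    ∃ H : HSL.{0}, Finite H.carrier ∧
      ∃ X B C : Set H.carrier,
        IsSubHSL X ∧ IsSubHSL B ∧ IsSubHSL C ∧
        X ⊆ B ∧ X ⊆ C ∧
        (∀ x ∈ X, ∀ b ∈ B, x ≤ b → b ∈ X) ∧
        (∀ x ∈ X, ∀ c ∈ C, x ≤ c → c ∈ X) ∧
        (∀ T : Set H.carrier, IsSubHSL T → B ⊆ T → C ⊆ T → ∀ a : H.carrier, a ∈ T) ∧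
        ¬ (∀ x ∈ X, ∀ a : H.carrier, x ≤ a → a ∈ X) := by
  refine ⟨⟨P, by decide⟩, (inferInstance : Finite P), Xs, Bs, Cs,
    ⟨by decide, by decide, by decide⟩, ⟨by decide, by decide, by decide⟩,
    ⟨by decide, by decide, by decide⟩,
    by intro a ha; revert ha; revert a; decide,
    by intro a ha; revert ha; revert a; decide,
    by decide, by decide, ?_, ?_⟩
  · intro T ⟨htop, hinf, himp⟩ hB hC a
    have h01 : ((0, 1) : P) ∈ T := hB (Or.inl rfl)
    have h10 : ((1, 0) : P) ∈ T := hC (Or.inl rfl)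
    have h22 : ((2, 2) : P) ∈ T := hB (Or.inr (Or.inl rfl))
    have h33 : ((3, 3) : P) ∈ T := hB (Or.inr (Or.inr rfl))
    have h00 : ((0, 0) : P) ∈ T :=
      (by decide : ((0, 1) : P) ⊓ (1, 0) = (0, 0)) ▸ hinf _ h01 _ h10
    have h03 : ((0, 3) : P) ∈ T :=
      (by decide : ((1, 0) : P) ⇨ (0, 1) = (0, 3)) ▸ himp _ h10 _ h01
    have h30 : ((3, 0) : P) ∈ T :=
      (by decide : ((0, 1) : P) ⇨ (1, 0) = (3, 0)) ▸ himp _ h01 _ h10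
    have h23 : ((2, 3) : P) ∈ T :=
      (by decide : ((3, 0) : P) ⇨ (2, 2) = (2, 3)) ▸ himp _ h30 _ h22
    have h32 : ((3, 2) : P) ∈ T :=
      (by decide : ((0, 3) : P) ⇨ (2, 2) = (3, 2)) ▸ himp _ h03 _ h22
    have h13 : ((1, 3) : P) ∈ T :=
      (by decide : ((3, 0) : P) ⇨ (1, 0) = (1, 3)) ▸ himp _ h30 _ h10
    have h31 : ((3, 1) : P) ∈ T :=
      (by decide : ((0, 3) : P) ⇨ (0, 1) = (3, 1)) ▸ himp _ h03 _ h01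
    have h02 : ((0, 2) : P) ∈ T :=
      (by decide : ((0, 3) : P) ⊓ (3, 2) = (0, 2)) ▸ hinf _ h03 _ h32
    have h11 : ((1, 1) : P) ∈ T :=
      (by decide : ((1, 3) : P) ⊓ (3, 1) = (1, 1)) ▸ hinf _ h13 _ h31
    have h12 : ((1, 2) : P) ∈ T :=
      (by decide : ((1, 3) : P) ⊓ (3, 2) = (1, 2)) ▸ hinf _ h13 _ h32
    have h20 : ((2, 0) : P) ∈ T :=
      (by decide : ((2, 3) : P) ⊓ (3, 0) = (2, 0)) ▸ hinf _ h23 _ h30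
    have h21 : ((2, 1) : P) ∈ T :=
      (by decide : ((2, 3) : P) ⊓ (3, 1) = (2, 1)) ▸ hinf _ h23 _ h31
    obtain ⟨a1, a2⟩ := a
    fin_cases a1 <;> fin_cases a2 <;>
      first
        | exact h00 | exact h01 | exact h02 | exact h03
        | exact h10 | exact h11 | exact h12 | exact h13
        | exact h20 | exact h21 | exact h22 | exact h23
        | exact h30 | exact h31 | exact h32 | exact h33
  · intro h
    exact absurd (h (2, 2) (Or.inl rfl) (3, 2) (by decide)) (by decide)
end
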